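/- arXiv:2501.12118 — 3 statements merged into one kernel-verified Lean document; each statement's English description precedes it below -/
import Mathlib

section
/- If y₀ ∈ D(A) with ‖Ay₀‖ ≤ α, A dissipative with I - hA bijective and ‖(I-hA)⁻¹‖ ≤ 1, g Lipschitz with constant L_g and ρ := hL_g < 1, and y₁ solves (I - hA)y₁ = y₀ + h g(y₁), then ‖y₀ - y₁‖ ≤ (1-ρ)⁻¹ (hα + h‖g(y₀)‖). -/
/-- Dissipativity implies `‖v‖ ≤ ‖v - h•Av‖`. -/
lemma diss_key {H : Type*} [NormedAddCommGroup H] [InnerProductSpace ℂ H]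
    (D : Submodule ℂ H) (A : D →ₗ[ℂ] H)
    (hdiss : ∀ v : D, (@inner ℂ H _ (v : H) (A v)).re ≤ 0)
    (h : ℝ) (hh : 0 < h) (v : D) :
    ‖(v : H)‖ ≤ ‖(v : H) - h • A v‖ := by
  rcases eq_or_ne (v : H) 0 with hv | hv
  · simp [hv]
  have hpos : 0 < ‖(v : H)‖ := norm_pos_iff.mpr hv
  have h1 : ‖(v : H)‖ ^ 2 ≤ (@inner ℂ H _ (v : H) ((v : H) - h • A v)).re := by
    have : (@inner ℂ H _ (v : H) ((v : H) - h • A v)).re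
        = ‖(v : H)‖ ^ 2 - h * (@inner ℂ H _ (v : H) (A v)).re := by
      rw [inner_sub_right, show h • A v = (h : ℂ) • A v from by
        simp [Complex.real_smul], inner_smul_right]
      rw [Complex.sub_re, Complex.re_ofReal_mul]
      congr 1
      exact inner_self_eq_norm_sq (𝕜 := ℂ) _
    rw [this]
    nlinarith [hdiss v]
  have h2 : (@inner ℂ H _ (v : H) ((v : H) - h • A v)).re
      ≤ ‖(v : H)‖ * ‖(v : H) - h • A v‖ := by
    calc (@inner ℂ H _ (v : H) ((v : H) - h • A v)).re
        ≤ ‖(@inner ℂ H _ (v : H) ((v : H) - h • A v))‖ := Complex.re_le_norm _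
      _ ≤ ‖(v : H)‖ * ‖(v : H) - h • A v‖ := norm_inner_le_norm _ _
  nlinarith

/-- Refined increment bound for `y₀ ∈ D(A)` with `‖A y₀‖ ≤ α`:
`‖y₀ - y₁‖ ≤ (1-ρ)⁻¹ (h α + h ‖g(y₀)‖)`. -/
theorem stmt6 {H : Type*} [NormedAddCommGroup H] [InnerProductSpace ℂ H]
    (D : Submodule ℂ H) (hdense : Dense (D : Set H))
    (A : D →ₗ[ℂ] H)
    (hdiss : ∀ v : D, (@inner ℂ H _ (v : H) (A v)).re ≤ 0)
    (h : ℝ) (hh : 0 < h)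
    (hbij : Function.Bijective (fun v : D => (v : H) - h • A v))
    (g : H → H) (Lg ρ : ℝ) (hLg : 0 ≤ Lg)
    (hg : ∀ a b : H, ‖g a - g b‖ ≤ Lg * ‖a - b‖)
    (hρ : ρ = h * Lg) (hρ1 : ρ < 1)
    (y₀ : D) (α : ℝ) (hα : ‖A y₀‖ ≤ α)
    (y₁ : D)
    (heuler : (y₁ : H) - h • A y₁ = (y₀ : H) + h • g (y₁ : H)) :
    ‖(y₀ : H) - (y₁ : H)‖ ≤ (1 - ρ)⁻¹ * (h * α + h * ‖g (y₀ : H)‖) := by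
  set v : D := y₁ - y₀ with hv
  have hveq : ((v : H)) - h • A v = h • g (y₁ : H) + h • A y₀ := by
    have : A v = A y₁ - A y₀ := by simp [hv]
    have hvc : (v : H) = (y₁ : H) - (y₀ : H) := by simp [hv]
    rw [this, hvc, smul_sub]
    have := heuler
    abel_nf
    abel_nf at this ⊢
    linear_combination (norm := module) this
  have key := diss_key D A hdiss h hh v
  rw [hveq] at key
  have hvc : ‖(v : H)‖ = ‖(y₀ : H) - (y₁ : H)‖ := by
    rw [show (v : H) = (y₁ : H) - (y₀ : H) by simp [hv], norm_sub_rev]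
  set N := ‖(y₀ : H) - (y₁ : H)‖ with hN
  have hN0 : 0 ≤ N := norm_nonneg _
  have bound : N ≤ ρ * N + (h * α + h * ‖g (y₀ : H)‖) := by
    have h1 : ‖h • g (y₁ : H) + h • A y₀‖
        ≤ h * ‖g (y₁ : H) - g (y₀ : H)‖ + h * ‖g (y₀ : H)‖ + h * ‖A y₀‖ := by
      calc ‖h • g (y₁ : H) + h • A y₀‖ ≤ ‖h • g (y₁ : H)‖ + ‖h • A y₀‖ :=
            norm_add_le _ _
        _ = h * ‖g (y₁ : H)‖ + h * ‖A y₀‖ := by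
            rw [norm_smul, norm_smul, Real.norm_of_nonneg hh.le]
        _ ≤ h * (‖g (y₁ : H) - g (y₀ : H)‖ + ‖g (y₀ : H)‖) + h * ‖A y₀‖ := by
            have := norm_sub_norm_le (g (y₁ : H)) (g (y₀ : H))
            nlinarith [norm_sub_norm_le (g (y₁ : H)) (g (y₀ : H))]
        _ = h * ‖g (y₁ : H) - g (y₀ : H)‖ + h * ‖g (y₀ : H)‖ + h * ‖A y₀‖ := by ring
    have h2 : ‖g (y₁ : H) - g (y₀ : H)‖ ≤ Lg * N := by
      have := hg (y₁ : H) (y₀ : H)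
      rwa [norm_sub_rev (y₁ : H)] at this
    have := key.trans h1
    rw [hvc] at this
    nlinarith
  have h1ρ : 0 < 1 - ρ := by linarith
  rw [inv_mul_eq_div, le_div_iff₀ h1ρ]
  nlinarith
end

section
/- Let y : [t₀, t₁] → H be twice continuously differentiable and satisfy ẏ(t) = Ay(t) + g(y(t)), where A is dissipative on the Hilbert space H, g Lipschitz with constant L_g, and ρ := hL_g < 1 with h = t₁ - t₀. If y₁ solves the implicit Euler step (y₁ - y(t₀))/h = Ay₁ + g(y₁), then the local error is bounded by ‖y₁ - y(t₁)‖ ≤ h² (1-ρ)⁻¹ · (1/2) max_{t ∈ [t₀,t₁]} ‖ÿ(t)‖. -/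
/-- Local error of the implicit Euler method for a C² solution of `ẏ = Ay + g(y)`:
`‖y₁ - y(t₁)‖ ≤ h² (1-ρ)⁻¹ (1/2) max ‖ÿ‖`. -/
theorem stmt7 {H : Type*} [NormedAddCommGroup H] [InnerProductSpace ℂ H]
    (D : Submodule ℂ H) (A : D →ₗ[ℂ] H)
    (hdiss : ∀ v : D, (@inner ℂ H _ (v : H) (A v)).re ≤ 0)
    (g : H → H) (Lg ρ : ℝ) (hLg : 0 ≤ Lg)
    (hg : ∀ a b : H, ‖g a - g b‖ ≤ Lg * ‖a - b‖)
    (t₀ t₁ h : ℝ) (ht : t₀ < t₁) (hdef : h = t₁ - t₀)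
    (hρ : ρ = h * Lg) (hρ1 : ρ < 1)
    -- the exact solution `y`, with `y(t) ∈ D(A)` and `ẏ = A y + g(y)` on `[t₀, t₁]`,
    -- expressed via `yD t : D` with `yD t = y t` and derivative `ẏ t = A (yD t) + g (y t)`:
    (y : ℝ → H) (yD : ℝ → D)
    (hyD : ∀ t ∈ Set.Icc t₀ t₁, ((yD t : H) = y t))
    (hy' : ∀ t ∈ Set.Icc t₀ t₁, HasDerivAt y (A (yD t) + g (y t)) t)
    -- the second derivative `ÿ`:
    (y'' : ℝ → H)
    (hy'' : ∀ t ∈ Set.Icc t₀ t₁,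
      HasDerivAt (fun s : ℝ => A (yD s) + g (y s)) (y'' t) t)
    (hy''cont : ContinuousOn y'' (Set.Icc t₀ t₁))
    -- the implicit Euler step starting from `y(t₀)`:
    (y₁ : D)
    (heuler : (y₁ : H) - y t₀ = h • (A y₁ + g (y₁ : H)))
    -- any uniform bound on `‖ÿ‖` over `[t₀, t₁]`, in particular the maximum:
    (M : ℝ) (hM : ∀ t ∈ Set.Icc t₀ t₁, ‖y'' t‖ ≤ M) :
    ‖(y₁ : H) - y t₁‖ ≤ h ^ 2 * (1 - ρ)⁻¹ * (1 / 2) * M := by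
  have ht₁ : t₁ ∈ Set.Icc t₀ t₁ := ⟨le_of_lt ht, le_rfl⟩
  have ht₀ : t₀ ∈ Set.Icc t₀ t₁ := ⟨le_rfl, le_of_lt ht⟩
  have hh : 0 < h := by rw [hdef]; linarith
  have hM0 : 0 ≤ M := (norm_nonneg _).trans (hM t₀ ht₀)
  have hρ0 : 0 ≤ ρ := by rw [hρ]; positivity
  -- notation
  set φ : ℝ → H := fun s => A (yD s) + g (y s) with hφ
  set v : H := φ t₁ with hv
  set d : H := y t₁ - y t₀ - h • v with hd
  set e : H := (y₁ : H) - y t₁ with he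
  -- Step 1: bound the derivative difference
  have hphi : ∀ x ∈ Set.Icc t₀ t₁, ‖φ x - v‖ ≤ M * (t₁ - x) := by
    intro x hx
    have key := norm_image_sub_le_of_norm_deriv_le_segment' (a := x) (b := t₁)
      (f := φ) (f' := y'') (C := M)
      (fun s hs => (hy'' s ⟨hx.1.trans hs.1, hs.2⟩).hasDerivWithinAt)
      (fun s hs => hM s ⟨hx.1.trans hs.1, le_of_lt hs.2⟩) t₁ ⟨hx.2, le_rfl⟩
    calc ‖φ x - v‖ = ‖φ t₁ - φ x‖ := by rw [norm_sub_rev]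
    _ ≤ M * (t₁ - x) := key
  -- Step 2: the defect bound ‖d‖ ≤ M h² / 2
  have hdbound : ‖d‖ ≤ M * h ^ 2 / 2 := by
    set F : ℝ → H := fun t => y t - y t₀ - (t - t₀) • v with hF
    set B : ℝ → ℝ := fun t => M * (t₁ * t - t ^ 2 / 2 - (t₁ * t₀ - t₀ ^ 2 / 2)) with hB
    have hF' : ∀ t ∈ Set.Icc t₀ t₁, HasDerivAt F (φ t - v) t := by
      intro t htc
      have h1 : HasDerivAt (fun t : ℝ => (t - t₀) • v) ((1 : ℝ) • v) t :=
        ((hasDerivAt_id t).sub_const t₀).smul_const v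
      have h2 := ((hy' t htc).sub_const (y t₀)).sub h1
      rw [one_smul] at h2
      exact h2
    have hBd : ∀ t : ℝ, HasDerivAt B (M * (t₁ - t)) t := by
      intro t
      have h1 : HasDerivAt (fun t : ℝ => t₁ * t - t ^ 2 / 2 - (t₁ * t₀ - t₀ ^ 2 / 2))
          (t₁ - t) t := by
        have := (((hasDerivAt_id t).const_mul t₁).sub
          ((hasDerivAt_pow 2 t).div_const 2)).sub_const (t₁ * t₀ - t₀ ^ 2 / 2)
        refine this.congr_deriv ?_
        norm_num
      simpa [hB] using h1.const_mul M
    have key := image_norm_le_of_norm_deriv_right_le_deriv_boundary (a := t₀) (b := t₁)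
      (f := F) (f' := fun t => φ t - v) (B := B) (B' := fun t => M * (t₁ - t))
      (fun t htc => (hF' t htc).continuousAt.continuousWithinAt)
      (fun t htc => (hF' t (Set.Ico_subset_Icc_self htc)).hasDerivWithinAt)
      (by simp [hF, hB]) hBd
      (fun t htc => hphi t (Set.Ico_subset_Icc_self htc)) ht₁
    have hFt₁ : F t₁ = d := by rw [hF, hd, hdef]
    have hBt₁ : B t₁ = M * h ^ 2 / 2 := by rw [hB, hdef]; ring
    rw [← hFt₁, ← hBt₁]; exact key
  -- Step 3: the error equation
  have heq : e = h • (A (y₁ - yD t₁)) + (h • (g (y₁ : H) - g (y t₁)) - d) := by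
    have h1 : (A (y₁ - yD t₁) : H) = A y₁ - A (yD t₁) := by rw [map_sub]
    rw [h1, hd, hv, hφ, he]
    have h2 : ((y₁ : H) - y t₀) - (y t₁ - y t₀) = (y₁ : H) - y t₁ := by abel
    rw [← h2, heuler]
    simp only [smul_sub, smul_add]
    abel
  -- Step 4: inner product estimate
  have hecoe : e = ((y₁ - yD t₁ : D) : H) := by
    rw [he, Submodule.coe_sub, hyD t₁ ht₁]
  have hsq : ‖e‖ ^ 2 ≤ ‖e‖ * (ρ * ‖e‖ + ‖d‖) := by
    have h0 : (‖e‖ : ℝ) ^ 2 = (inner ℂ e e : ℂ).re := by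
      have := inner_self_eq_norm_sq (𝕜 := ℂ) e
      rw [RCLike.re_to_complex] at this
      exact this.symm
    rw [h0]
    nth_rewrite 2 [heq]
    rw [inner_add_right, Complex.add_re]
    have hterm1 : (inner ℂ e (h • (A (y₁ - yD t₁) : H)) : ℂ).re ≤ 0 := by
      have : (h : ℂ) • (A (y₁ - yD t₁) : H) = h • (A (y₁ - yD t₁) : H) := by
        simp [Complex.coe_smul]
      rw [← this, inner_smul_right]
      have := hdiss (y₁ - yD t₁)
      rw [← hecoe] at this
      calc ((h : ℂ) * inner ℂ e (A (y₁ - yD t₁) : H)).re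
          = h * (inner ℂ e (A (y₁ - yD t₁) : H) : ℂ).re := by
            rw [Complex.re_ofReal_mul]
        _ ≤ 0 := mul_nonpos_of_nonneg_of_nonpos (le_of_lt hh) this
    have hterm2 : (inner ℂ e (h • (g (y₁ : H) - g (y t₁)) - d) : ℂ).re ≤
        ‖e‖ * (ρ * ‖e‖ + ‖d‖) := by
      calc (inner ℂ e (h • (g (y₁ : H) - g (y t₁)) - d) : ℂ).re
          ≤ ‖e‖ * ‖h • (g (y₁ : H) - g (y t₁)) - d‖ := by
            have := re_inner_le_norm (𝕜 := ℂ) e (h • (g (y₁ : H) - g (y t₁)) - d)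
            rwa [RCLike.re_to_complex] at this
        _ ≤ ‖e‖ * (ρ * ‖e‖ + ‖d‖) := by
            apply mul_le_mul_of_nonneg_left _ (norm_nonneg e)
            calc ‖h • (g (y₁ : H) - g (y t₁)) - d‖
                ≤ ‖h • (g (y₁ : H) - g (y t₁))‖ + ‖d‖ := norm_sub_le _ _
              _ ≤ ρ * ‖e‖ + ‖d‖ := by
                  gcongr
                  rw [norm_smul, Real.norm_of_nonneg (le_of_lt hh), hρ, mul_assoc]
                  exact mul_le_mul_of_nonneg_left (hg _ _) (le_of_lt hh)
    linarith
  -- Step 5: conclude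
  have hfinal : (1 - ρ) * ‖e‖ ≤ M * h ^ 2 / 2 := by
    rcases eq_or_lt_of_le (norm_nonneg e) with h0 | h0
    · rw [← h0, mul_zero]; positivity
    · have : ‖e‖ ≤ ρ * ‖e‖ + ‖d‖ := by
        have := hsq
        rw [sq] at this
        nlinarith
      nlinarith
  have h1ρ : (0 : ℝ) < 1 - ρ := by linarith
  rw [show h ^ 2 * (1 - ρ)⁻¹ * (1 / 2) * M = (M * h ^ 2 / 2) / (1 - ρ) by
    field_simp, le_div_iff₀ h1ρ]
  calc ‖(y₁ : H) - y t₁‖ * (1 - ρ) = (1 - ρ) * ‖e‖ := by rw [he]; ring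
    _ ≤ M * h ^ 2 / 2 := hfinal
end

section
/- Let A be dissipative with each λᵢ - hA boundedly invertible with ‖(λᵢ - hA)⁻¹‖ ≤ μ for i = 1,…,s, and g : H → H Lipschitz with constant L_g. Suppose the transformed Newton stage iterates satisfy (λᵢ - hA) Ŷᵢ^{k+1} = λᵢ y₀ + h Ĝᵢ^k and the exact stages satisfy (λᵢ - hA) Ŷᵢ = λᵢ y₀ + h Ĝᵢ, where Ĝ^k = (T⁻¹ ⊗ I) (g(Yⱼ^k))ⱼ, Ĝ = (T⁻¹ ⊗ I)(g(Yⱼ))ⱼ, Y^k = (T ⊗ I)Ŷ^k, Y = (T ⊗ I)Ŷ, with ‖T‖₂ = 1. Then ‖Y^{k+1} - Y‖ ≤ μ · cond₂(T) · h L_g · ‖Y^k - Y‖, where cond₂(T) = ‖T‖₂‖T⁻¹‖₂. -/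

private lemma sqrt_sum_sq_le_aux {s : ℕ} (u v : Fin s → ℝ) (c : ℝ) (hc : 0 ≤ c)
    (hu : ∀ i, 0 ≤ u i) (hle : ∀ i, u i ≤ c * v i) :
    Real.sqrt (∑ i, u i ^ 2) ≤ c * Real.sqrt (∑ i, v i ^ 2) := by
  have h1 : ∑ i, u i ^ 2 ≤ c ^ 2 * ∑ i, v i ^ 2 := by
    rw [Finset.mul_sum]
    refine Finset.sum_le_sum fun i _ => ?_
    calc u i ^ 2 ≤ (c * v i) ^ 2 := pow_le_pow_left₀ (hu i) (hle i) 2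
      _ = c ^ 2 * v i ^ 2 := by ring
  calc Real.sqrt (∑ i, u i ^ 2) ≤ Real.sqrt (c ^ 2 * ∑ i, v i ^ 2) := Real.sqrt_le_sqrt h1
    _ = c * Real.sqrt (∑ i, v i ^ 2) := by
        rw [Real.sqrt_mul (sq_nonneg c), Real.sqrt_sq hc]

/-- Contraction of the modified Newton iteration for the implicit Runge--Kutta stages
(Lemma 7.2): `‖Y^{k+1} - Y‖ ≤ μ · cond₂(T) · h L_g · ‖Y^k - Y‖` in the product Hilbert
norm on `H^s`, where `cond₂(T) = ‖T‖₂ ‖T⁻¹‖₂` and `‖T‖₂ = 1`. -/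
theorem stmt15 {H : Type*} [NormedAddCommGroup H] [InnerProductSpace ℂ H]
    (D : Submodule ℂ H) (A : D →ₗ[ℂ] H)
    (hdiss : ∀ v : D, (@inner ℂ H _ (v : H) (A v)).re ≤ 0)
    (h : ℝ) (hh : 0 < h)
    (s : ℕ) (lam : Fin s → ℂ) (μ : ℝ) (hμ : 0 ≤ μ)
    -- each `λᵢ - hA` is boundedly invertible with `‖(λᵢ - hA)⁻¹‖ ≤ μ`:
    (hinv : ∀ i : Fin s, ∀ v : D, ‖(v : H)‖ ≤ μ * ‖lam i • (v : H) - h • A v‖)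
    (g : H → H) (Lg : ℝ) (hLg : 0 ≤ Lg)
    (hg : ∀ a b : H, ‖g a - g b‖ ≤ Lg * ‖a - b‖)
    -- the diagonalizing matrix `T` with inverse `Tinv`, with ℓ²-operator-norm bounds
    -- `‖T‖₂ ≤ nT = 1` and `‖T⁻¹‖₂ ≤ nTinv` on `H^s` with the product Hilbert norm:
    (T Tinv : Matrix (Fin s) (Fin s) ℂ)
    (hTTinv : T * Tinv = 1) (hTinvT : Tinv * T = 1)
    (nT nTinv : ℝ) (hnT : nT = 1) (hnTinv : 0 ≤ nTinv)
    (hTbound : ∀ v : Fin s → H,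
      Real.sqrt (∑ i, ‖∑ j, T i j • v j‖ ^ 2) ≤ nT * Real.sqrt (∑ i, ‖v i‖ ^ 2))
    (hTinvbound : ∀ v : Fin s → H,
      Real.sqrt (∑ i, ‖∑ j, Tinv i j • v j‖ ^ 2) ≤ nTinv * Real.sqrt (∑ i, ‖v i‖ ^ 2))
    -- transformed Newton iterates `Ŷ^k` and exact transformed stages `Ŷ`:
    (y₀ : H) (Yhat : ℕ → Fin s → D) (Yh : Fin s → D)
    -- with `Y^k = (T ⊗ I) Ŷ^k`, `Y = (T ⊗ I) Ŷ`, `Ĝ^k = (T⁻¹ ⊗ I)(g(Y_j^k))_j`, etc.: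
    (hnewton : ∀ k : ℕ, ∀ i : Fin s,
      lam i • (Yhat (k + 1) i : H) - h • A (Yhat (k + 1) i)
        = lam i • y₀ + h • ∑ j, Tinv i j • g (∑ l, T j l • (Yhat k l : H)))
    (hstages : ∀ i : Fin s,
      lam i • (Yh i : H) - h • A (Yh i)
        = lam i • y₀ + h • ∑ j, Tinv i j • g (∑ l, T j l • (Yh l : H))) :
    ∀ k : ℕ,
      Real.sqrt (∑ i, ‖(∑ l, T i l • (Yhat (k + 1) l : H)) - ∑ l, T i l • (Yh l : H)‖ ^ 2)
        ≤ μ * (nT * nTinv) * (h * Lg) *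
          Real.sqrt (∑ i, ‖(∑ l, T i l • (Yhat k l : H)) - ∑ l, T i l • (Yh l : H)‖ ^ 2) := by
  intro k
  set E : Fin s → H := fun l => (Yhat (k + 1) l : H) - (Yh l : H) with hE
  set Δ : Fin s → H := fun j =>
    g (∑ l, T j l • (Yhat k l : H)) - g (∑ l, T j l • (Yh l : H)) with hΔ
  set w : Fin s → H := fun i => ∑ j, Tinv i j • Δ j with hw
  have keyeq : ∀ i : Fin s,
      lam i • (((Yhat (k + 1) i - Yh i : D)) : H) - h • A (Yhat (k + 1) i - Yh i)
        = h • w i := by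
    intro i
    have e1 := hnewton k i
    have e2 := hstages i
    push_cast [Submodule.coe_sub]
    rw [map_sub, smul_sub, smul_sub]
    have : lam i • (Yhat (k + 1) i : H) - lam i • (Yh i : H) -
        (h • A (Yhat (k + 1) i) - h • A (Yh i))
        = (lam i • (Yhat (k + 1) i : H) - h • A (Yhat (k + 1) i))
          - (lam i • (Yh i : H) - h • A (Yh i)) := by abel
    rw [this, e1, e2]
    rw [hw, hΔ]
    simp only [smul_sub, Finset.sum_sub_distrib]
    abel
  have key : ∀ i : Fin s, ‖(((Yhat (k + 1) i - Yh i : D)) : H)‖ ≤ (μ * h) * ‖w i‖ := by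
    intro i
    calc ‖(((Yhat (k + 1) i - Yh i : D)) : H)‖
        ≤ μ * ‖lam i • (((Yhat (k + 1) i - Yh i : D)) : H) - h • A (Yhat (k + 1) i - Yh i)‖ :=
          hinv i _
      _ = μ * ‖h • w i‖ := by rw [keyeq i]
      _ = (μ * h) * ‖w i‖ := by
          rw [norm_smul, Real.norm_eq_abs, abs_of_pos hh]; ring
  have hEcoe : ∀ l, (((Yhat (k + 1) l - Yh l : D)) : H) = E l := by
    intro l; simp [hE]
  have hdiff : ∀ i, (∑ l, T i l • (Yhat (k + 1) l : H)) - ∑ l, T i l • (Yh l : H)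
      = ∑ l, T i l • E l := by
    intro i; simp [hE, smul_sub, Finset.sum_sub_distrib]
  have hdiffk : ∀ i, (∑ l, T i l • (Yhat k l : H)) - ∑ l, T i l • (Yh l : H)
      = ∑ l, T i l • ((Yhat k l : H) - (Yh l : H)) := by
    intro i; simp [smul_sub, Finset.sum_sub_distrib]
  have step1 : Real.sqrt (∑ i, ‖∑ l, T i l • E l‖ ^ 2)
      ≤ nT * Real.sqrt (∑ i, ‖E i‖ ^ 2) := hTbound E
  have step2 : Real.sqrt (∑ i, ‖E i‖ ^ 2) ≤ (μ * h) * Real.sqrt (∑ i, ‖w i‖ ^ 2) := by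
    refine sqrt_sum_sq_le_aux _ _ _ (by positivity) (fun i => norm_nonneg _) ?_
    intro i; rw [← hEcoe i]; exact key i
  have step3 : Real.sqrt (∑ i, ‖w i‖ ^ 2) ≤ nTinv * Real.sqrt (∑ i, ‖Δ i‖ ^ 2) :=
    hTinvbound Δ
  have step4 : Real.sqrt (∑ i, ‖Δ i‖ ^ 2)
      ≤ Lg * Real.sqrt (∑ i, ‖(∑ l, T i l • (Yhat k l : H)) - ∑ l, T i l • (Yh l : H)‖ ^ 2) := by
    refine sqrt_sum_sq_le_aux _ _ _ hLg (fun i => norm_nonneg _) ?_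
    intro i
    calc ‖Δ i‖ ≤ Lg * ‖(∑ l, T i l • (Yhat k l : H)) - ∑ l, T i l • (Yh l : H)‖ := hg _ _
      _ = _ := rfl
  have hnT0 : (0:ℝ) ≤ nT := by rw [hnT]; norm_num
  calc Real.sqrt (∑ i, ‖(∑ l, T i l • (Yhat (k + 1) l : H)) - ∑ l, T i l • (Yh l : H)‖ ^ 2)
      = Real.sqrt (∑ i, ‖∑ l, T i l • E l‖ ^ 2) := by
        congr 1; exact Finset.sum_congr rfl fun i _ => by rw [hdiff i]
    _ ≤ nT * Real.sqrt (∑ i, ‖E i‖ ^ 2) := step1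
    _ ≤ nT * ((μ * h) * Real.sqrt (∑ i, ‖w i‖ ^ 2)) :=
        mul_le_mul_of_nonneg_left step2 hnT0
    _ ≤ nT * ((μ * h) * (nTinv * Real.sqrt (∑ i, ‖Δ i‖ ^ 2))) := by
        refine mul_le_mul_of_nonneg_left (mul_le_mul_of_nonneg_left step3 ?_) hnT0
        positivity
    _ ≤ nT * ((μ * h) * (nTinv * (Lg *
          Real.sqrt (∑ i, ‖(∑ l, T i l • (Yhat k l : H)) - ∑ l, T i l • (Yh l : H)‖ ^ 2)))) := by
        refine mul_le_mul_of_nonneg_left (mul_le_mul_of_nonneg_left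
          (mul_le_mul_of_nonneg_left step4 hnTinv) ?_) hnT0
        positivity
    _ = μ * (nT * nTinv) * (h * Lg) *
          Real.sqrt (∑ i, ‖(∑ l, T i l • (Yhat k l : H)) - ∑ l, T i l • (Yh l : H)‖ ^ 2) := by
        ring
end
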